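/- Let (X, d) be a metric space, G a group acting on X by isometries, and Y ⊆ X a G-invariant subset. Suppose for each G-orbit O in Y a representative y(O) and radii 0 < ε'_{y(O)} < ε_{y(O)}/4 are chosen. Suppose f : X → X is a map, and for each orbit representative y there is a set Z_y contained in the ball B(y, ε_y/2) with f(g·Z_y) = B(g·y, ε'_y) for all g ∈ G, and f is injective on each ball B(g·y, ε_y). If z₁ ∈ Z_{y₁}, z₂ ∈ Z_{y₂}, g₁, g₂ ∈ G, ε_{y₁} ≥ ε_{y₂}, and f(g₁·z₁) = f(g₂·z₂), then g₁·z₁ = g₂·z₂. (Hence f is injective on the union ∪_{O, g} g·Z_{y(O)}.) -/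
import Mathlib


open Metric

/-- Injectivity of the exponential-type map on the union of translated patches
(the key step of the invariant tubular neighborhood construction):
if `f(g₁·z₁) = f(g₂·z₂)` with `zᵢ ∈ Z_{yᵢ}`, then `g₁·z₁ = g₂·z₂`. -/
theorem inj_on_union_of_translates
    {X : Type*} [MetricSpace X] {G : Type*} [Group G] [MulAction G X]
    (hiso : ∀ (g : G) (a b : X), dist (g • a) (g • b) = dist a b)
    {ι : Type*} (y : ι → X) (ε ε' : ι → ℝ) (Z : ι → Set X) (f : X → X)
    (hε' : ∀ i, 0 < ε' i) (hε'ε : ∀ i, ε' i < ε i / 4)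
    (hZ : ∀ i, Z i ⊆ ball (y i) (ε i / 2))
    (himg : ∀ (i : ι) (g : G), f '' ((g • ·) '' Z i) = ball (g • y i) (ε' i))
    (hinj : ∀ (i : ι) (g : G), Set.InjOn f (ball (g • y i) (ε i)))
    (i₁ i₂ : ι) (g₁ g₂ : G) (z₁ z₂ : X)
    (hz₁ : z₁ ∈ Z i₁) (hz₂ : z₂ ∈ Z i₂) (hεle : ε i₂ ≤ ε i₁)
    (heq : f (g₁ • z₁) = f (g₂ • z₂)) :
    g₁ • z₁ = g₂ • z₂ := by
  -- f(g₁•z₁) ∈ ball (g₁•y₁) ε'₁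
  have h1 : f (g₁ • z₁) ∈ ball (g₁ • y i₁) (ε' i₁) := by
    rw [← himg i₁ g₁]; exact ⟨g₁ • z₁, ⟨z₁, hz₁, rfl⟩, rfl⟩
  have h2 : f (g₂ • z₂) ∈ ball (g₂ • y i₂) (ε' i₂) := by
    rw [← himg i₂ g₂]; exact ⟨g₂ • z₂, ⟨z₂, hz₂, rfl⟩, rfl⟩
  rw [heq] at h1
  have hyy : dist (g₂ • y i₂) (g₁ • y i₁) < ε' i₂ + ε' i₁ :=
    calc dist (g₂ • y i₂) (g₁ • y i₁)
        ≤ dist (g₂ • y i₂) (f (g₂ • z₂)) + dist (f (g₂ • z₂)) (g₁ • y i₁) :=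
          dist_triangle _ _ _
      _ < ε' i₂ + ε' i₁ := by
          have a := mem_ball.mp h1
          have b := mem_ball.mp h2
          rw [dist_comm (g₂ • y i₂) (f (g₂ • z₂))]
          linarith
  have hz₁' : dist (g₁ • z₁) (g₁ • y i₁) < ε i₁ / 2 := by
    rw [hiso]; exact mem_ball.mp (hZ i₁ hz₁)
  have hz₂' : dist (g₂ • z₂) (g₂ • y i₂) < ε i₂ / 2 := by
    rw [hiso]; exact mem_ball.mp (hZ i₂ hz₂)
  have hb₁ : g₁ • z₁ ∈ ball (g₁ • y i₁) (ε i₁) := by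
    rw [mem_ball]; linarith [hε' i₁, hε'ε i₁]
  have hb₂ : g₂ • z₂ ∈ ball (g₁ • y i₁) (ε i₁) := by
    rw [mem_ball]
    calc dist (g₂ • z₂) (g₁ • y i₁)
        ≤ dist (g₂ • z₂) (g₂ • y i₂) + dist (g₂ • y i₂) (g₁ • y i₁) :=
          dist_triangle _ _ _
      _ < ε i₁ := by linarith [hε'ε i₁, hε'ε i₂]
  exact hinj i₁ g₁ hb₁ hb₂ heq
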